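/- For fixed s ≥ 1, a triangle-free graph G admits a set S of at most k vertices with G − S being K_{1,s+1}-free if and only if the graph G' obtained by adding a vertex w adjacent to all vertices of G admits a set F of at most k edges with G' − F being s-diamond-free. -/

import Mathlib

/-- The `s`-diamond `K₂ × (s+1)K₁`: two adjacent center vertices, each adjacent to `s+1`
pairwise non-adjacent vertices. For `s = 1` this is the diamond. -/
def sDiamond (s : ℕ) : SimpleGraph (Fin 2 ⊕ Fin (s + 1)) where
  Adj a b :=
    match a, b with
    | Sum.inl x, Sum.inl y => x ≠ y
    | Sum.inl _, Sum.inr _ => True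
    | Sum.inr _, Sum.inl _ => True
    | Sum.inr _, Sum.inr _ => False
  symm := by
    constructor
    rintro (x | x) (y | y) h
    · exact h.symm
    · trivial
    · trivial
    · exact h
  loopless := by
    constructor
    rintro (x | x) h
    · exact h rfl
    · exact h

/-- The star `K_{1,n}`: one center adjacent to `n` pairwise non-adjacent leaves. -/
def starGraph (n : ℕ) : SimpleGraph (Fin 1 ⊕ Fin n) where
  Adj a b :=
    match a, b with
    | Sum.inl _, Sum.inr _ => True
    | Sum.inr _, Sum.inl _ => True
    | _, _ => False
  symm := by
    constructor
    rintro (x | x) (y | y) h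
    · exact h
    · trivial
    · trivial
    · exact h
  loopless := by constructor; rintro (x | x) h <;> exact h

/-- The graph obtained from `G` by adding a new dominating vertex `none` adjacent to all
vertices of `G`. -/
def cone {V : Type*} (G : SimpleGraph V) : SimpleGraph (Option V) where
  Adj a b :=
    match a, b with
    | some x, some y => G.Adj x y
    | some _, none => True
    | none, some _ => True
    | none, none => False
  symm := by
    constructor
    rintro (_ | x) (_ | y) h
    · exact h
    · trivial
    · trivial
    · exact h.symm
  loopless := by
    constructor
    rintro (_ | x) h
    · exact h
    · exact G.irrefl h


/-!
Deleting a vertex set `S` from `G` corresponds to deleting the edges from the apex `w` of the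
cone to `S`. In the cone over a triangle-free graph, two adjacent vertices with two distinct
common neighbours include `w`, since otherwise one of the common neighbours lies in `G` and
closes a triangle. So `w` is a center of every `s`-diamond, and the other center together with
the `s + 1` leaves is a `K_{1,s+1}` of `G`, avoiding `S` when only the edges from `w` to `S` were
deleted. Conversely, every edge of the cone has an endpoint in `G`; choosing one for each
deleted edge gives `S` with `|S| ≤ |F|`, and a star of `G - S` plus `w` spans an `s`-diamond
none of whose edges meets `S`, so none of them was deleted.
-/

open Function

theorem SimpleGraph.deleteEdges_adj_iff_of_forall_exists_mem {W : Type*} {H : SimpleGraph W}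
    {F : Set (Sym2 W)} {T : Set W} (hF : ∀ e ∈ F, ∃ x ∈ T, x ∈ e) {a b : W} (ha : a ∉ T)
    (hb : b ∉ T) : (H.deleteEdges F).Adj a b ↔ H.Adj a b := by
  refine ⟨fun h => deleteEdges_le F h, fun h => deleteEdges_adj.2 ⟨h, fun he => ?_⟩⟩
  obtain ⟨x, hxT, hx⟩ := hF _ he
  rcases Sym2.mem_iff.1 hx with rfl | rfl
  exacts [ha hxT, hb hxT]

section Embeddings

variable {W : Type*} {H : SimpleGraph W}

theorem nonempty_starGraph_embedding_iff (n : ℕ) :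
    Nonempty (starGraph n ↪g H) ↔ ∃ (u : W) (v : Fin n → W), Injective v ∧
      (∀ j, H.Adj u (v j)) ∧ ∀ j j', ¬ H.Adj (v j) (v j') := by
  constructor
  · rintro ⟨f⟩
    refine ⟨f (Sum.inl 0), f ∘ Sum.inr, f.injective.comp Sum.inr_injective,
      fun j => f.map_adj_iff.2 trivial, fun j j' h => f.map_adj_iff.1 h⟩
  · rintro ⟨u, v, hv, huv, hvv⟩
    refine ⟨⟨⟨Sum.elim (fun _ => u) v, ?_⟩, ?_⟩⟩
    · rintro (x | x) (y | y) h
      · exact congrArg Sum.inl (Subsingleton.elim x y)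
      · exact absurd h (huv y).ne
      · exact absurd h.symm (huv x).ne
      · exact congrArg Sum.inr (hv h)
    · rintro (x | x) (y | y)
      · exact iff_of_false H.irrefl id
      · exact iff_of_true (huv y) trivial
      · exact iff_of_true (huv x).symm trivial
      · exact iff_of_false (hvv x y) id

theorem nonempty_sDiamond_embedding_iff (s : ℕ) :
    Nonempty (sDiamond s ↪g H) ↔ ∃ (a b : W) (v : Fin (s + 1) → W), Injective v ∧
      H.Adj a b ∧ (∀ j, H.Adj a (v j)) ∧ (∀ j, H.Adj b (v j)) ∧
      ∀ j j', ¬ H.Adj (v j) (v j') := by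
  constructor
  · rintro ⟨f⟩
    refine ⟨f (Sum.inl 0), f (Sum.inl 1), f ∘ Sum.inr, f.injective.comp Sum.inr_injective,
      f.map_adj_iff.2 (by decide : (0 : Fin 2) ≠ 1), fun j => f.map_adj_iff.2 trivial,
      fun j => f.map_adj_iff.2 trivial, fun j j' h => f.map_adj_iff.1 h⟩
  · rintro ⟨a, b, v, hv, hab, hav, hbv, hvv⟩
    refine ⟨⟨⟨Sum.elim ![a, b] v, ?_⟩, ?_⟩⟩
    · rintro (x | x) (y | y) h
      · fin_cases x <;> fin_cases y
        all_goals first | rfl | exact absurd h hab.ne | exact absurd h.symm hab.ne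
      · fin_cases x
        exacts [absurd h (hav y).ne, absurd h (hbv y).ne]
      · fin_cases y
        exacts [absurd h.symm (hav x).ne, absurd h.symm (hbv x).ne]
      · exact congrArg Sum.inr (hv h)
    · rintro (x | x) (y | y)
      · fin_cases x <;> fin_cases y
        exacts [iff_of_false H.irrefl (· rfl), iff_of_true hab (by decide : (0 : Fin 2) ≠ 1),
          iff_of_true hab.symm (by decide : (1 : Fin 2) ≠ 0), iff_of_false H.irrefl (· rfl)]
      · fin_cases x
        exacts [iff_of_true (hav y) trivial, iff_of_true (hbv y) trivial]
      · fin_cases y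
        exacts [iff_of_true (hav x).symm trivial, iff_of_true (hbv x).symm trivial]
      · exact iff_of_false (hvv x y) id

end Embeddings

theorem Set.exists_encard_le_forall_exists_mem {α β : Type*} {F : Set α} {P : α → β → Prop}
    (h : ∀ e ∈ F, ∃ x, P e x) :
    ∃ S : Set β, S.encard ≤ F.encard ∧ ∀ e ∈ F, ∃ x ∈ S, P e x := by
  choose g hg using h
  refine ⟨Set.range fun e : F => g e e.2, ?_,
    fun e he => ⟨_, ⟨⟨e, he⟩, rfl⟩, hg e he⟩⟩
  rw [← Set.image_univ]
  exact (Set.encard_image_le _ _).trans_eq (Set.encard_univ _)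

section Cone

variable {V : Type*} {G : SimpleGraph V}

theorem exists_some_mem_of_mem_edgeSet_cone {e : Sym2 (Option V)} (he : e ∈ (cone G).edgeSet) :
    ∃ x : V, some x ∈ e := by
  induction e using Sym2.ind with
  | _ a b =>
    cases a with
    | none =>
      cases b with
      | none => exact ((cone G).irrefl ((SimpleGraph.mem_edgeSet _).1 he)).elim
      | some y => exact ⟨y, Sym2.mem_mk_right _ _⟩
    | some x => exact ⟨x, Sym2.mem_mk_left _ _⟩

def apexEdges (S : Set V) : Set (Sym2 (Option V)) := (fun x => s(none, some x)) '' S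

theorem apexEdges_subset_edgeSet_cone (S : Set V) : apexEdges S ⊆ (cone G).edgeSet := by
  rintro _ ⟨x, -, rfl⟩
  trivial

theorem encard_apexEdges (S : Set V) : (apexEdges S).encard = S.encard :=
  Injective.encard_image (fun x y h => by simpa using h) S

theorem cone_deleteEdges_apexEdges_adj_none_some {S : Set V} {x : V} :
    ((cone G).deleteEdges (apexEdges S)).Adj none (some x) ↔ x ∉ S := by
  simp [apexEdges, cone]

theorem cone_deleteEdges_apexEdges_adj_some_some {S : Set V} {x y : V} :
    ((cone G).deleteEdges (apexEdges S)).Adj (some x) (some y) ↔ G.Adj x y := by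
  rw [SimpleGraph.deleteEdges_adj_iff_of_forall_exists_mem (T := {none}) ?_ (by simp) (by simp)]
  · rfl
  · rintro _ ⟨x, -, rfl⟩
    exact ⟨none, rfl, Sym2.mem_mk_left _ _⟩

end Cone

section Reduction

variable {V : Type*} {G : SimpleGraph V}

theorem cone_eq_none_or_eq_none_of_adj (htf : G.CliqueFree 3) {a b c d : Option V} (hcd : c ≠ d)
    (hab : (cone G).Adj a b) (hac : (cone G).Adj a c) (hbc : (cone G).Adj b c)
    (had : (cone G).Adj a d) (hbd : (cone G).Adj b d) : a = none ∨ b = none := by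
  classical
  by_contra! hab'
  obtain ⟨x, rfl⟩ := Option.ne_none_iff_exists'.1 hab'.1
  obtain ⟨y, rfl⟩ := Option.ne_none_iff_exists'.1 hab'.2
  have htriangle {z : V} (hxz : G.Adj x z) (hyz : G.Adj y z) : False :=
    htf {x, y, z} ((SimpleGraph.is3Clique_triple_iff (G := G)).2 ⟨hab, hxz, hyz⟩)
  cases c with
  | some z => exact htriangle hac hbc
  | none =>
    obtain ⟨z, rfl⟩ := Option.ne_none_iff_exists'.1 hcd.symm
    exact htriangle had hbd

theorem nonempty_starGraph_embedding_of_cone_deleteEdges_apexEdges {S : Set V} {n : ℕ}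
    {b : Option V} {v : Fin n → Option V} (hv : Injective v)
    (hb : ((cone G).deleteEdges (apexEdges S)).Adj none b)
    (hnv : ∀ j, ((cone G).deleteEdges (apexEdges S)).Adj none (v j))
    (hbv : ∀ j, ((cone G).deleteEdges (apexEdges S)).Adj b (v j))
    (hvv : ∀ j j', ¬ ((cone G).deleteEdges (apexEdges S)).Adj (v j) (v j')) :
    Nonempty (starGraph n ↪g G.induce Sᶜ) := by
  obtain ⟨u, rfl⟩ := Option.ne_none_iff_exists'.1 hb.ne'
  choose x hx using fun j => Option.ne_none_iff_exists'.1 (hnv j).ne'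
  obtain rfl : v = fun j => some (x j) := funext hx
  simp only [cone_deleteEdges_apexEdges_adj_none_some,
    cone_deleteEdges_apexEdges_adj_some_some] at hb hnv hbv hvv
  exact (nonempty_starGraph_embedding_iff n).2
    ⟨⟨u, hb⟩, fun j => ⟨x j, hnv j⟩, fun j j' h => hv (by simpa using h), hbv, hvv⟩

theorem isEmpty_sDiamond_embedding_cone_deleteEdges_apexEdges {s : ℕ} (hs : 1 ≤ s)
    (htf : G.CliqueFree 3) {S : Set V} (hS : IsEmpty (starGraph (s + 1) ↪g G.induce Sᶜ)) :
    IsEmpty (sDiamond s ↪g (cone G).deleteEdges (apexEdges S)) := by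
  rw [← not_nonempty_iff, nonempty_sDiamond_embedding_iff]
  rintro ⟨a, b, v, hv, hab, hav, hbv, hvv⟩
  have : Nontrivial (Fin (s + 1)) := Fin.nontrivial_iff_two_le.2 (by omega)
  obtain ⟨j, j', hjj'⟩ := exists_pair_ne (Fin (s + 1))
  have hle := SimpleGraph.deleteEdges_le (G := cone G) (apexEdges S)
  rcases cone_eq_none_or_eq_none_of_adj htf (hv.ne hjj') (hle hab) (hle (hav j)) (hle (hbv j))
    (hle (hav j')) (hle (hbv j')) with rfl | rfl
  · exact (nonempty_starGraph_embedding_of_cone_deleteEdges_apexEdges hv hab hav hbv hvv).elim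
      hS.false
  · exact (nonempty_starGraph_embedding_of_cone_deleteEdges_apexEdges hv hab.symm hbv hav
      hvv).elim hS.false

theorem nonempty_sDiamond_embedding_cone_deleteEdges {s : ℕ} {S : Set V}
    {F : Set (Sym2 (Option V))} (hF : ∀ e ∈ F, ∃ x ∈ S, some x ∈ e)
    (h : Nonempty (starGraph (s + 1) ↪g G.induce Sᶜ)) :
    Nonempty (sDiamond s ↪g (cone G).deleteEdges F) := by
  obtain ⟨u, v, hv, huv, hvv⟩ := (nonempty_starGraph_embedding_iff _).1 h
  have hFS : ∀ e ∈ F, ∃ x ∈ some '' S, x ∈ e := fun e he =>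
    let ⟨x, hx, hxe⟩ := hF e he; ⟨some x, Set.mem_image_of_mem _ hx, hxe⟩
  have hadj {a b : Option V} (ha : a ∉ some '' S) (hb : b ∉ some '' S) :=
    SimpleGraph.deleteEdges_adj_iff_of_forall_exists_mem (H := cone G) hFS ha hb
  have hnone : none ∉ some '' S := by simp
  have hsome (x : ↥Sᶜ) : some x.1 ∉ some '' S :=
    (Option.some_injective V).mem_set_image.not.2 x.2
  rw [nonempty_sDiamond_embedding_iff]
  exact ⟨none, some u, fun j => some (v j).1,
    fun j j' h => hv (Subtype.ext (Option.some_injective _ h)),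
    (hadj hnone (hsome u)).2 trivial, fun j => (hadj hnone (hsome _)).2 trivial,
    fun j => (hadj (hsome u) (hsome _)).2 (huv j),
    fun j j' h => hvv j j' ((hadj (hsome _) (hsome _)).1 h)⟩

end Reduction

/-- For `s ≥ 1` and `G` triangle-free: there is a set of at most `k` vertices whose
deletion makes `G` `K_{1,s+1}`-free iff there is a set of at most `k` edges whose
deletion from the cone over `G` makes it `s`-diamond-free. -/
theorem stmt_16 {V : Type*} (G : SimpleGraph V) (s k : ℕ) (hs : 1 ≤ s)
    (htf : G.CliqueFree 3) :
    (∃ S : Set V, S.encard ≤ (k : ℕ∞) ∧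
      IsEmpty (starGraph (s + 1) ↪g G.induce Sᶜ)) ↔
    (∃ F : Set (Sym2 (Option V)), F ⊆ (cone G).edgeSet ∧ F.encard ≤ (k : ℕ∞) ∧
      IsEmpty (sDiamond s ↪g (cone G).deleteEdges F)) := by
  constructor
  · rintro ⟨S, hSk, hS⟩
    exact ⟨apexEdges S, apexEdges_subset_edgeSet_cone S, (encard_apexEdges S).trans_le hSk,
      isEmpty_sDiamond_embedding_cone_deleteEdges_apexEdges hs htf hS⟩
  · rintro ⟨F, hFG, hFk, hF⟩
    obtain ⟨S, hSF, hSF'⟩ := Set.exists_encard_le_forall_exists_mem fun e he =>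
      exists_some_mem_of_mem_edgeSet_cone (hFG he)
    refine ⟨S, hSF.trans hFk, not_nonempty_iff.1 fun h => ?_⟩
    exact (nonempty_sDiamond_embedding_cone_deleteEdges hSF' h).elim hF.false
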